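/- For every n ≥ 1 there exists a bijection χ from the set of 321-avoiding permutations of [n] onto the set of 132-avoiding permutations of [n] such that for all 321-avoiding permutations p, q: Exc(p) ⊆ Exc(q) if and only if Des(χ(p)) ⊆ Des(χ(q)). (That is, the poset Q^A_n of 321-avoiding permutations of [n] ordered by containment of excedence sets is isomorphic to the poset P^A_n of 132-avoiding permutations of [n] ordered by containment of descent sets.) -/

import Mathlib

/-- A permutation `p` of `[n]` (0-based `Fin n`) is 321-avoiding if there are
no positions `a < b < c` with `p a > p b > p c`. -/
def Avoids321 {n : ℕ} (p : Equiv.Perm (Fin n)) : Prop :=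
  ∀ a b c : Fin n, a < b → b < c → ¬ (p b < p a ∧ p c < p b)

/-- A permutation `p` of `[n]` (0-based `Fin n`) is 132-avoiding if there are
no positions `a < b < c` with `p a < p c < p b`. -/
def Avoids132 {n : ℕ} (p : Equiv.Perm (Fin n)) : Prop :=
  ∀ a b c : Fin n, a < b → b < c → ¬ (p a < p c ∧ p c < p b)

/-- The descent set of `p`, as a set of 1-based positions `i ∈ [n-1]`:
`i` is a descent iff `p(i) > p(i+1)`, i.e. (0-based) `p ⟨i-1⟩ > p ⟨i⟩`. -/
def Des {n : ℕ} (p : Equiv.Perm (Fin n)) : Set ℕ :=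
  {i | ∃ h : 1 ≤ i ∧ i < n,
        p ⟨i, h.2⟩ < p ⟨i - 1, Nat.lt_of_le_of_lt (Nat.sub_le i 1) h.2⟩}

/-- The excedence set of `p`, as a set of 1-based positions `i ∈ [n]` with
`p(i) > i`, i.e. (0-based) `(p ⟨i-1⟩ : ℕ) > i - 1`. -/
def Exc {n : ℕ} (p : Equiv.Perm (Fin n)) : Set ℕ :=
  {i | ∃ h : 1 ≤ i ∧ i ≤ n,
        (i - 1 : ℕ) <
          (p ⟨i - 1, Nat.lt_of_lt_of_le (Nat.sub_lt h.1 Nat.one_pos) h.2⟩ : ℕ)}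

/-!
Both classes are coded by weakly decreasing sequences `a : Fin n → ℕ` with `a i + i < n`, so that
the descents of `χ p` and the excedances of `p` both become the descents of the common code.

A permutation `q` is determined by its Lehmer code `#{j > i | q j < q i}`, and since there are `n!`
bounded codes every one of them occurs. The code is weakly decreasing iff `q` avoids 132, and it
descends exactly where `q` does.

A 321-avoiding `p` is increasing both on its excedances and on its other positions, so it is
determined by its excedances and their values. Both are recorded by the code `a i = n - p e`, `e`
the first excedance `≥ i`, which descends exactly at the excedances; conversely every weakly
decreasing bounded code is realised by placing `n - a e` at its descents `e` and filling the other
positions increasingly.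
-/

open Finset Function Equiv

variable {n : ℕ}

lemma exists_le_apply_le_of_injective {f : Fin n → Fin n} (hf : Injective f) (x : Fin n) :
    ∃ y, x ≤ y ∧ f y ≤ x := by
  by_contra! h
  have := card_le_card_of_injOn f (s := Ici x) (t := Ioi x)
    (fun y hy => by simpa using h y (by simpa using hy)) hf.injOn
  rw [Fin.card_Ici, Fin.card_Ioi] at this
  omega

lemma exists_covBy_crossing {α : Type*} [LinearOrder α] (f : Fin n → α) {a b : Fin n} {t : α}
    (hab : a < b) (ha : f a < t) (hb : t < f b) :
    ∃ i k, i ⋖ k ∧ k ≤ b ∧ f i ≤ t ∧ t < f k := by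
  obtain ⟨k, ⟨hak, htk⟩, hmin⟩ := wellFounded_lt.has_min {k | a < k ∧ t < f k} ⟨b, hab, hb⟩
  obtain ⟨i, hai, hik⟩ := exists_le_covBy_of_lt hak
  refine ⟨i, k, hik, not_lt.mp (hmin b ⟨hab, hb⟩), ?_, htk⟩
  rcases hai.eq_or_lt with rfl | hai
  · exact ha.le
  · exact not_lt.mp fun hti => hmin i ⟨hai, hti⟩ hik.lt

lemma Equiv.Perm.eq_of_eqOn_of_strictMonoOn_compl {α : Type*} [LinearOrder α] [Finite α]
    {σ τ : Perm α} {s : Set α} (hs : s.EqOn σ τ) (hσ : StrictMonoOn σ sᶜ)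
    (hτ : StrictMonoOn τ sᶜ) : σ = τ := by
  have hrange : Set.range (sᶜ.domRestrict σ) = Set.range (sᶜ.domRestrict τ) := by
    simp only [Set.range_domRestrict, Set.image_compl_eq σ.bijective,
      Set.image_compl_eq τ.bijective, hs.image_eq]
  have hcompl := (hσ.domRestrict.range_inj hτ.domRestrict).mp hrange
  ext x
  by_cases hx : x ∈ s
  · exact hs hx
  · exact congrFun hcompl ⟨x, hx⟩

lemma avoids321_of_strictMonoOn_compl {p : Perm (Fin n)} {s : Set (Fin n)}
    (h : StrictMonoOn p s) (h' : StrictMonoOn p sᶜ) : Avoids321 p := by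
  have split : ∀ {x y}, x < y → p y < p x → (x ∈ s ↔ y ∉ s) := fun {x y} hxy hyx => by
    constructor
    · exact fun hx hy => (h hx hy hxy).not_gt hyx
    · exact fun hy => by_contra fun hx => (h' hx hy hxy).not_gt hyx
  intro a b c hab hbc ⟨hba, hcb⟩
  have := split hab hba
  have := split hbc hcb
  have := split (hab.trans hbc) (hcb.trans hba)
  tauto

def IsDescent {β : Type*} [LT β] (f : Fin n → β) (j : Fin n) : Prop :=
  ∃ k, j ⋖ k ∧ f k < f j

def inversionsFrom (q : Perm (Fin n)) (i : Fin n) : Finset (Fin n) :=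
  {j | i < j ∧ q j < q i}

def lehmer (q : Perm (Fin n)) (i : Fin n) : ℕ :=
  #(inversionsFrom q i)

lemma mem_inversionsFrom {q : Perm (Fin n)} {i j : Fin n} :
    j ∈ inversionsFrom q i ↔ i < j ∧ q j < q i := by
  simp [inversionsFrom]

lemma lehmer_add_lt (q : Perm (Fin n)) (i : Fin n) : lehmer q i + i < n := by
  have := card_le_card (s := inversionsFrom q i) (t := Ioi i) fun j hj =>
    mem_Ioi.mpr (mem_inversionsFrom.mp hj).1
  rw [Fin.card_Ioi] at this
  unfold lehmer
  omega

lemma lehmer_eq_card_values (q : Perm (Fin n)) (i : Fin n) :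
    lehmer q i = #{v | v < q i ∧ i < q.symm v} := by
  rw [lehmer, inversionsFrom, ← card_map q.toEmbedding, map_filter, map_univ_equiv]
  simp [and_comm]

-- If `q` and `q'` agree before `i`, the values not used before `i` are the same for both, and
-- `lehmer q i` counts those below `q i`.
lemma lehmer_lt_of_eqOn_of_lt {q q' : Perm (Fin n)} {i : Fin n} (h : ∀ j < i, q j = q' j)
    (hlt : q i < q' i) : lehmer q i < lehmer q' i := by
  have hsymm : ∀ v, q'.symm v < i → q.symm v = q'.symm v := fun v hv => by
    rw [q.symm_apply_eq, h _ hv, q'.apply_symm_apply]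
  rw [lehmer_eq_card_values, lehmer_eq_card_values]
  refine card_lt_card ((ssubset_iff_of_subset fun v hv => ?_).mpr ⟨q i, ?_, by simp⟩)
  · simp only [mem_filter, mem_univ, true_and] at hv ⊢
    refine ⟨hv.1.trans hlt, lt_of_not_ge fun hle => ?_⟩
    rcases hle.lt_or_eq with hv' | hv'
    · exact ((hsymm v hv').trans_lt hv').not_gt hv.2
    · rw [q'.symm_apply_eq] at hv'
      exact (hv.1.trans hlt).ne (by rw [hv'])
  · simp only [mem_filter, mem_univ, true_and]
    refine ⟨hlt, lt_of_not_ge fun hle => ?_⟩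
    rcases hle.lt_or_eq with hv' | hv'
    · rw [← hsymm _ hv', q.symm_apply_apply] at hv'
      exact hv'.false
    · rw [q'.symm_apply_eq] at hv'
      exact hlt.ne hv'

lemma lehmer_injective : Injective (lehmer (n := n)) := by
  intro q q' h
  refine Equiv.ext fun i => ?_
  induction i using WellFoundedLT.induction with
  | _ i ih =>
    rcases lt_trichotomy (q i) (q' i) with hlt | heq | hgt
    · exact absurd (congrFun h i) (lehmer_lt_of_eqOn_of_lt ih hlt).ne
    · exact heq
    · exact absurd (congrFun h i) (lehmer_lt_of_eqOn_of_lt (fun j hj => (ih j hj).symm) hgt).ne'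

lemma exists_lehmer_eq {a : Fin n → ℕ} (ha : ∀ i, a i + i < n) : ∃ q, lehmer q = a := by
  let L : Perm (Fin n) → (i : Fin n) → Fin (n - i) :=
    fun q i => ⟨lehmer q i, by have := lehmer_add_lt q i; omega⟩
  have hL : Bijective L := by
    rw [Fintype.bijective_iff_injective_and_card]
    refine ⟨fun q q' h => lehmer_injective (funext fun i => congrArg Fin.val (congrFun h i)), ?_⟩
    simp [Fintype.card_perm, Fin.prod_univ_eq_prod_range (n - ·), ← Nat.descFactorial_eq_prod_range,
      Nat.descFactorial_self]
  obtain ⟨q, hq⟩ := hL.2 fun i => ⟨a i, by have := ha i; omega⟩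
  exact ⟨q, funext fun i => congrArg Fin.val (congrFun hq i)⟩

lemma inversionsFrom_subset_of_covBy {q : Perm (Fin n)} {j k : Fin n} (hjk : j ⋖ k)
    (h : q j < q k) : inversionsFrom q j ⊆ inversionsFrom q k := fun l hl => by
  obtain ⟨hjl, hlj⟩ := mem_inversionsFrom.mp hl
  refine mem_inversionsFrom.mpr ⟨(hjk.ge_of_gt hjl).lt_of_ne ?_, hlj.trans h⟩
  rintro rfl
  exact hlj.not_gt h

lemma lehmer_lt_of_covBy {q : Perm (Fin n)} {j k : Fin n} (hjk : j ⋖ k) (h : q k < q j) :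
    lehmer q k < lehmer q j := by
  refine card_lt_card ((ssubset_iff_of_subset fun l hl => ?_).mpr
    ⟨k, mem_inversionsFrom.mpr ⟨hjk.lt, h⟩, by simp [mem_inversionsFrom]⟩)
  obtain ⟨hkl, hlk⟩ := mem_inversionsFrom.mp hl
  exact mem_inversionsFrom.mpr ⟨hjk.lt.trans hkl, hlk.trans h⟩

lemma lehmer_lt_lehmer_iff_of_covBy {q : Perm (Fin n)} {j k : Fin n} (hjk : j ⋖ k) :
    lehmer q k < lehmer q j ↔ q k < q j := by
  refine ⟨fun hl => (lt_or_gt_of_ne (q.injective.ne hjk.ne')).resolve_right fun h => ?_,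
    lehmer_lt_of_covBy hjk⟩
  exact (card_le_card (inversionsFrom_subset_of_covBy hjk h)).not_gt hl

lemma isDescent_lehmer_iff {q : Perm (Fin n)} {j : Fin n} :
    IsDescent (lehmer q) j ↔ IsDescent q j :=
  exists_congr fun _ => and_congr_right lehmer_lt_lehmer_iff_of_covBy

lemma antitone_lehmer_iff {q : Perm (Fin n)} : Antitone (lehmer q) ↔ Avoids132 q := by
  constructor
  · intro hq a b c hab hbc ⟨hac, hcb⟩
    obtain ⟨i, k, hik, hkb, hic, hck⟩ := exists_covBy_crossing q hab hac hcb
    have hic : q i < q c :=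
      hic.lt_of_ne (q.injective.ne (hik.lt.trans_le hkb |>.trans hbc).ne)
    have hlt : lehmer q i < lehmer q k :=
      card_lt_card ((ssubset_iff_of_subset (inversionsFrom_subset_of_covBy hik (hic.trans hck))).mpr
        ⟨c, mem_inversionsFrom.mpr ⟨hkb.trans_lt hbc, hck⟩,
          fun hc => (mem_inversionsFrom.mp hc).2.not_gt hic⟩)
    exact (hq hik.le).not_gt hlt
  · refine fun hq => (antitone_iff_forall_covBy _).mpr fun j k hjk => ?_
    rcases lt_or_gt_of_ne (q.injective.ne hjk.ne') with h | h
    · exact (lehmer_lt_of_covBy hjk h).le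
    · refine card_le_card fun l hl => ?_
      obtain ⟨hkl, hlk⟩ := mem_inversionsFrom.mp hl
      refine mem_inversionsFrom.mpr ⟨hjk.lt.trans hkl, lt_of_not_ge fun hjl => ?_⟩
      exact hq j k l hjk.lt hkl ⟨hjl.lt_of_ne (q.injective.ne (hjk.lt.trans hkl).ne), hlk⟩

-- For 321-avoiding `p` the supremum is `n - p e` at the first excedance `e ≥ i` (`excCode_of_lt`).
def excCode (p : Perm (Fin n)) (i : Fin n) : ℕ :=
  ({e | i ≤ e ∧ e < p e} : Finset (Fin n)).sup fun e => n - p e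

lemma mem_excCode_support {p : Perm (Fin n)} {i e : Fin n} :
    e ∈ ({e | i ≤ e ∧ e < p e} : Finset (Fin n)) ↔ i ≤ e ∧ e < p e := by
  simp

lemma antitone_excCode (p : Perm (Fin n)) : Antitone (excCode p) := fun _ _ hij =>
  sup_mono fun _ he =>
    have ⟨hie, he⟩ := mem_excCode_support.mp he
    mem_excCode_support.mpr ⟨hij.trans hie, he⟩

lemma excCode_add_lt (p : Perm (Fin n)) (i : Fin n) : excCode p i + i < n := by
  suffices excCode p i < n - i by omega
  refine (Finset.sup_lt_iff (by simp [i.isLt])).mpr fun e he => ?_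
  obtain ⟨hie, he⟩ := mem_excCode_support.mp he
  rw [Fin.le_def] at hie
  rw [Fin.lt_def] at he
  omega

lemma Avoids321.strictMonoOn_exc {p : Perm (Fin n)} (hp : Avoids321 p) :
    StrictMonoOn p {e | e < p e} := by
  intro e (he : e < p e) e' (he' : e' < p e') hlt
  refine lt_of_not_ge fun hle => ?_
  obtain ⟨y, hy, hpy⟩ := exists_le_apply_le_of_injective p.injective e'
  have hy : e' < y := hy.lt_of_ne fun h => by subst h; exact hpy.not_gt he'
  exact hp e e' y hlt hy ⟨hle.lt_of_ne (p.injective.ne hlt.ne'), hpy.trans_lt he'⟩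

lemma Avoids321.strictMonoOn_not_exc {p : Perm (Fin n)} (hp : Avoids321 p) :
    StrictMonoOn p {e | e < p e}ᶜ := by
  intro d (hd : ¬ d < p d) d' (hd' : ¬ d' < p d') hlt
  refine lt_of_not_ge fun hle => ?_
  have hgt : p d' < p d := hle.lt_of_ne (p.injective.ne hlt.ne')
  obtain ⟨h, hhd, hph⟩ : ∃ h, h < d ∧ p d < p h := by
    by_contra! hsmall
    have hmaps : ∀ x ∈ insert d' (Iic d), p x ∈ Iic (p d) := by
      intro x hx
      rcases mem_insert.mp hx with rfl | hx
      · exact mem_Iic.mpr hgt.le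
      · rcases (mem_Iic.mp hx).lt_or_eq with hx | rfl
        · exact mem_Iic.mpr (hsmall x hx)
        · exact mem_Iic.mpr le_rfl
    have := card_le_card_of_injOn p hmaps p.injective.injOn
    rw [card_insert_of_notMem (by simpa using hlt), Fin.card_Iic, Fin.card_Iic] at this
    rw [not_lt, Fin.le_def] at hd
    omega
  exact hp h d d' hhd hlt ⟨hph, hgt⟩

lemma excCode_of_lt {p : Perm (Fin n)} (hp : Avoids321 p) {j : Fin n} (hj : j < p j) :
    excCode p j = n - p j := by
  refine le_antisymm (Finset.sup_le fun e he => ?_)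
    (le_sup (f := fun e => n - p e) (mem_excCode_support.mpr ⟨le_rfl, hj⟩))
  obtain ⟨hje, he⟩ := mem_excCode_support.mp he
  have := hp.strictMonoOn_exc.monotoneOn hj he hje
  rw [Fin.le_def] at this
  omega

lemma excCode_lt_excCode_iff_of_covBy {p : Perm (Fin n)} (hp : Avoids321 p) {j k : Fin n}
    (hjk : j ⋖ k) : excCode p k < excCode p j ↔ j < p j := by
  constructor
  · refine fun hlt => by_contra fun hj => hlt.ne (congrArg (sup · _) (filter_congr fun e _ => ?_))
    constructor
    · exact fun he => ⟨hjk.le.trans he.1, he.2⟩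
    · refine fun he => ⟨hjk.ge_of_gt (he.1.lt_of_ne ?_), he.2⟩
      rintro rfl
      exact hj he.2
  · intro hj
    rw [excCode_of_lt hp hj]
    refine (Finset.sup_lt_iff (by simp [(p j).isLt])).mpr fun e he => ?_
    obtain ⟨hke, he⟩ := mem_excCode_support.mp he
    have := hp.strictMonoOn_exc hj he (hjk.lt.trans_le hke)
    rw [Fin.lt_def] at this
    omega

lemma isDescent_excCode_iff {p : Perm (Fin n)} (hp : Avoids321 p) {j : Fin n} :
    IsDescent (excCode p) j ↔ j < p j := by
  refine ⟨fun ⟨k, hjk, hk⟩ => (excCode_lt_excCode_iff_of_covBy hp hjk).mp hk, fun hj => ?_⟩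
  have hk : (j : ℕ) + 1 < n := by have := (p j).isLt; rw [Fin.lt_def] at hj; omega
  exact ⟨⟨j + 1, hk⟩, by simp, (excCode_lt_excCode_iff_of_covBy hp (by simp)).mpr hj⟩

section Fill

variable {a : Fin n → ℕ}

-- This is `n - a e` whenever `a e ≥ 1`, in particular at descents; the shape keeps it in `Fin n`.
def descentValue (a : Fin n → ℕ) (e : Fin n) : Fin n :=
  ⟨n - 1 - (a e - 1), by have := e.isLt; omega⟩

lemma IsDescent.pos {e : Fin n} (he : IsDescent a e) : 0 < a e := by
  obtain ⟨k, -, hk⟩ := he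
  omega

lemma IsDescent.val_descentValue {e : Fin n} (he : IsDescent a e) :
    (descentValue a e : ℕ) = n - a e := by
  have := he.pos
  have := e.isLt
  simp only [descentValue]
  omega

lemma strictMonoOn_descentValue (ha : Antitone a) (hb : ∀ i : Fin n, a i + i < n) :
    StrictMonoOn (descentValue a) {e | IsDescent a e} := by
  intro e (he : IsDescent a e) e' (he' : IsDescent a e') hlt
  obtain ⟨k, hek, hk⟩ := id he
  have : a e' < a e := (ha (hek.ge_of_gt hlt)).trans_lt hk
  rw [Fin.lt_def, he.val_descentValue, he'.val_descentValue]
  have := he'.pos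
  have := hb e'
  omega

lemma IsDescent.lt_descentValue (hb : ∀ i : Fin n, a i + i < n) {e : Fin n}
    (he : IsDescent a e) : e < descentValue a e := by
  have := hb e
  rw [Fin.lt_def, he.val_descentValue]
  omega

-- The last position `e ≥ i` with `a e = a i > 0` is a descent, since `a` vanishes at the end.
open Classical in
lemma sup_isDescent_ge (ha : Antitone a) (hb : ∀ i : Fin n, a i + i < n) (i : Fin n) :
    ({e | i ≤ e ∧ IsDescent a e} : Finset (Fin n)).sup a = a i := by
  refine le_antisymm (Finset.sup_le fun e he => ha (mem_filter.mp he).2.1) ?_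
  rcases Nat.eq_zero_or_pos (a i) with h | hpos
  · simp [h]
  obtain ⟨e, ⟨hie, hae⟩, hmax⟩ := wellFounded_gt.has_min {e | i ≤ e ∧ a e = a i} ⟨i, le_rfl, rfl⟩
  have hlast : (e : ℕ) + 1 < n := by have := hb e; omega
  have hdesc : IsDescent a e := by
    refine ⟨⟨e + 1, hlast⟩, by simp, (ha (by simp [Fin.le_def])).lt_of_ne fun h => ?_⟩
    exact hmax ⟨e + 1, hlast⟩ ⟨hie.trans (by simp [Fin.le_def]), h.trans hae⟩ (by simp [Fin.lt_def])
  exact hae ▸ le_sup (f := a) (by simp [hie, hdesc])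

variable (ha : Antitone a) (hb : ∀ i : Fin n, a i + i < n)

noncomputable def descentValueEquiv :
    {e // IsDescent a e} ≃ {w // w ∈ descentValue a '' {e | IsDescent a e}} :=
  Equiv.Set.imageOfInjOn _ _ (strictMonoOn_descentValue ha hb).injOn

open Classical in
noncomputable def nonDescentOrderIso :
    {e // ¬ IsDescent a e} ≃o {w // w ∉ descentValue a '' {e | IsDescent a e}} :=
  have hcard : Fintype.card {w // w ∉ descentValue a '' {e | IsDescent a e}} =
      Fintype.card {e // ¬ IsDescent a e} := by
    rw [Fintype.card_subtype_compl, Fintype.card_subtype_compl,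
      Fintype.card_congr (descentValueEquiv ha hb)]
  (Fintype.orderIsoFinOfCardEq _ rfl).symm.trans (Fintype.orderIsoFinOfCardEq _ hcard)

open Classical in
/-- The permutation taking the value `n - a e` at each descent `e` of `a` and increasing on the
other positions. -/
noncomputable def fill : Perm (Fin n) :=
  Equiv.subtypeCongr (descentValueEquiv ha hb) (nonDescentOrderIso ha hb).toEquiv

lemma fill_apply_of_isDescent {e : Fin n} (he : IsDescent a e) :
    fill ha hb e = descentValue a e := by
  classical
  simp only [fill, subtypeCongr, trans_apply, sumCompl_symm_apply_of_pos he, sumCongr_apply,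
    Sum.map_inl, sumCompl_apply_inl]
  rfl

lemma fill_apply_of_not_isDescent {e : Fin n} (he : ¬ IsDescent a e) :
    fill ha hb e = nonDescentOrderIso ha hb ⟨e, he⟩ := by
  classical
  simp [fill, subtypeCongr, he]

lemma strictMonoOn_fill_compl : StrictMonoOn (fill ha hb) {e | IsDescent a e}ᶜ := by
  intro e he e' he' hlt
  rw [fill_apply_of_not_isDescent ha hb he, fill_apply_of_not_isDescent ha hb he']
  exact (nonDescentOrderIso ha hb).strictMono (Subtype.mk_lt_mk.mpr hlt)

lemma strictMonoOn_fill : StrictMonoOn (fill ha hb) {e | IsDescent a e} := fun e he e' he' hlt => by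
  rw [fill_apply_of_isDescent ha hb he, fill_apply_of_isDescent ha hb he']
  exact strictMonoOn_descentValue ha hb he he' hlt

lemma avoids321_fill : Avoids321 (fill ha hb) :=
  avoids321_of_strictMonoOn_compl (strictMonoOn_fill ha hb) (strictMonoOn_fill_compl ha hb)

lemma lt_fill_iff {j : Fin n} : j < fill ha hb j ↔ IsDescent a j := by
  refine ⟨fun hj => by_contra fun hnj => ?_, fun hj => ?_⟩
  · obtain ⟨y, hjy, hy⟩ := exists_le_apply_le_of_injective (fill ha hb).injective j
    have hjy : j < y := hjy.lt_of_ne fun h => by subst h; exact hy.not_gt hj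
    by_cases hdy : IsDescent a y
    · rw [fill_apply_of_isDescent ha hb hdy] at hy
      exact ((hjy.trans (hdy.lt_descentValue hb)).trans_le hy).false
    · exact (hj.trans (strictMonoOn_fill_compl ha hb hnj hdy hjy)).not_ge hy
  · rw [fill_apply_of_isDescent ha hb hj]
    exact hj.lt_descentValue hb

open Classical in
lemma excCode_fill : excCode (fill ha hb) = a := by
  funext i
  rw [excCode, ← sup_isDescent_ge ha hb i]
  refine sup_congr (filter_congr fun e _ => and_congr_right fun _ => lt_fill_iff ha hb) ?_
  intro e he
  have he : IsDescent a e := (mem_filter.mp he).2.2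
  rw [fill_apply_of_isDescent ha hb he, he.val_descentValue]
  have := hb e
  omega

end Fill

lemma fill_excCode {p : Perm (Fin n)} (hp : Avoids321 p) :
    fill (antitone_excCode p) (excCode_add_lt p) = p := by
  have hdesc : {e | IsDescent (excCode p) e} = {e | e < p e} :=
    Set.ext fun _ => isDescent_excCode_iff hp
  refine Equiv.Perm.eq_of_eqOn_of_strictMonoOn_compl (s := {e | e < p e}) (fun e he => ?_)
    (hdesc ▸ strictMonoOn_fill_compl _ _) hp.strictMonoOn_not_exc
  have hde : IsDescent (excCode p) e := (isDescent_excCode_iff hp).mpr he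
  rw [fill_apply_of_isDescent _ _ hde, Fin.ext_iff, hde.val_descentValue, excCode_of_lt hp he]
  have := (p e).isLt
  omega

def AntitoneCode (n : ℕ) : Type :=
  {a : Fin n → ℕ // Antitone a ∧ ∀ i : Fin n, a i + i < n}

noncomputable def lehmerEquiv : {q : Perm (Fin n) // Avoids132 q} ≃ AntitoneCode n :=
  Equiv.ofBijective (fun q => ⟨lehmer q.1, antitone_lehmer_iff.mpr q.2, lehmer_add_lt q.1⟩)
    ⟨fun q q' h => Subtype.ext (lehmer_injective (congrArg Subtype.val h)), fun a => by
      obtain ⟨q, hq⟩ := exists_lehmer_eq a.2.2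
      exact ⟨⟨q, antitone_lehmer_iff.mp (hq ▸ a.2.1)⟩, Subtype.ext hq⟩⟩

noncomputable def excCodeEquiv : {p : Perm (Fin n) // Avoids321 p} ≃ AntitoneCode n where
  toFun p := ⟨excCode p.1, antitone_excCode p.1, excCode_add_lt p.1⟩
  invFun a := ⟨fill a.2.1 a.2.2, avoids321_fill a.2.1 a.2.2⟩
  left_inv p := Subtype.ext (fill_excCode p.2)
  right_inv a := Subtype.ext (excCode_fill a.2.1 a.2.2)

lemma mem_Des_iff {q : Perm (Fin n)} {i : ℕ} :
    i ∈ Des q ↔ ∃ j : Fin n, (j : ℕ) + 1 = i ∧ IsDescent q j := by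
  constructor
  · rintro ⟨⟨hi, hin⟩, hlt⟩
    exact ⟨⟨i - 1, by omega⟩, by simp; omega, ⟨i, hin⟩, by simp; omega, hlt⟩
  · rintro ⟨⟨j, hj⟩, rfl, ⟨k, hk⟩, hjk, hlt⟩
    obtain rfl : j + 1 = k := by simpa using hjk
    exact ⟨⟨by omega, hk⟩, hlt⟩

lemma mem_Exc_iff {p : Perm (Fin n)} {i : ℕ} :
    i ∈ Exc p ↔ ∃ j : Fin n, (j : ℕ) + 1 = i ∧ j < p j := by
  constructor
  · rintro ⟨⟨hi, hin⟩, hlt⟩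
    exact ⟨⟨i - 1, by omega⟩, by simp; omega, hlt⟩
  · rintro ⟨⟨j, hj⟩, rfl, hlt⟩
    exact ⟨⟨by omega, hj⟩, hlt⟩

lemma Exc_eq_Des_lehmerEquiv_symm (p : {p : Perm (Fin n) // Avoids321 p}) :
    Exc p.1 = Des (lehmerEquiv.symm (excCodeEquiv p)).1 := by
  have hcode : lehmer (lehmerEquiv.symm (excCodeEquiv p)).1 = excCode p.1 :=
    congrArg Subtype.val (lehmerEquiv.apply_symm_apply (excCodeEquiv p))
  ext i
  simp only [mem_Exc_iff, mem_Des_iff, ← isDescent_lehmer_iff, hcode, isDescent_excCode_iff p.2]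

theorem stmt10_general (n : ℕ) :
    ∃ χ : {p : Equiv.Perm (Fin n) // Avoids321 p} ≃
          {p : Equiv.Perm (Fin n) // Avoids132 p},
      ∀ p q : {p : Equiv.Perm (Fin n) // Avoids321 p},
        Exc p.1 ⊆ Exc q.1 ↔ Des (χ p).1 ⊆ Des (χ q).1 :=
  ⟨excCodeEquiv.trans lehmerEquiv.symm, fun p q => by
    rw [Exc_eq_Des_lehmerEquiv_symm p, Exc_eq_Des_lehmerEquiv_symm q]; rfl⟩

/-- The poset `Q^A_n` of 321-avoiding permutations of `[n]` ordered by
containment of excedence sets is isomorphic to the poset `P^A_n` of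
132-avoiding permutations of `[n]` ordered by containment of descent sets. -/
theorem stmt10 (n : ℕ) (hn : 1 ≤ n) :
    ∃ χ : {p : Equiv.Perm (Fin n) // Avoids321 p} ≃
          {p : Equiv.Perm (Fin n) // Avoids132 p},
      ∀ p q : {p : Equiv.Perm (Fin n) // Avoids321 p},
        Exc p.1 ⊆ Exc q.1 ↔ Des (χ p).1 ⊆ Des (χ q).1 :=
  stmt10_general n
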